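/- arXiv:1705.03520 — 3 statements merged into one kernel-verified Lean document; each statement's English description precedes it below -/
import Mathlib

section
/- Let v : ℝⁿ → ℝ be continuously differentiable, γ ∈ (0,1], and let X : [t,∞) → ℝⁿ be a C¹ trajectory with derivative Ẋ(τ) = f(X(τ), U(τ)) where R(X(τ),U(τ)) + ∇v(X(τ))·f(X(τ),U(τ)) ≥ −ln γ · v(X(τ)) for all τ ≥ t. Then for all Δt > 0: v(X(t)) ≤ ∫_t^{t+Δt} γ^{τ−t} R(X(τ),U(τ)) dτ + γ^{Δt} v(X(t+Δt)). -/
open MeasureTheory intervalIntegral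

theorem HasDerivAt.const_rpow_sub_mul_comp {E : Type*} [NormedAddCommGroup E] [NormedSpace ℝ E]
    {v : E → ℝ} {X : ℝ → E} {X' : E} {γ t τ : ℝ} (hγ : 0 < γ)
    (hv : DifferentiableAt ℝ v (X τ)) (hX : HasDerivAt X X' τ) :
    HasDerivAt (fun s => γ ^ (s - t) * v (X s))
      (γ ^ (τ - t) * (Real.log γ * v (X τ) + fderiv ℝ v (X τ) X')) τ := by
  have hpow := ((hasDerivAt_id τ).sub_const t).const_rpow hγ
  refine (hpow.mul (hv.hasFDerivAt.comp_hasDerivAt τ hX)).congr_deriv ?_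
  simp only [id_eq, Function.comp_apply]
  ring

theorem stmt0_general {n : ℕ} {A : Type*}
    (f : EuclideanSpace ℝ (Fin n) → A → EuclideanSpace ℝ (Fin n))
    (R : EuclideanSpace ℝ (Fin n) → A → ℝ)
    (v : EuclideanSpace ℝ (Fin n) → ℝ)
    (γ t : ℝ) (hγ0 : 0 < γ)
    (X : ℝ → EuclideanSpace ℝ (Fin n)) (U : ℝ → A)
    (hv : ContDiff ℝ 1 v)
    (hX : ∀ τ, t ≤ τ → HasDerivAt X (f (X τ) (U τ)) τ)
    (hRcont : ContinuousOn (fun τ => R (X τ) (U τ)) (Set.Ici t))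
    (hineq : ∀ τ, t ≤ τ →
      R (X τ) (U τ) + fderiv ℝ v (X τ) (f (X τ) (U τ)) ≥ -Real.log γ * v (X τ)) :
    ∀ Δt > 0,
      v (X t) ≤ (∫ τ in t..(t + Δt), γ ^ (τ - t) * R (X τ) (U τ))
        + γ ^ Δt * v (X (t + Δt)) := by
  intro Δt hΔt
  have hderiv (τ : ℝ) (hτ : t ≤ τ) := (hX τ hτ).const_rpow_sub_mul_comp (t := t) hγ0
    (hv.differentiable one_ne_zero (X τ))
  have hcont : ContinuousOn (fun τ => γ ^ (τ - t) * v (X τ)) (Set.Icc t (t + Δt)) :=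
    fun τ hτ => (hderiv τ hτ.1).continuousAt.continuousWithinAt
  have hint : IntegrableOn (fun τ => γ ^ (τ - t) * R (X τ) (U τ)) (Set.Icc t (t + Δt)) :=
    ((Real.continuous_const_rpow hγ0.ne').comp (continuous_sub_right t) |>.continuousOn.mul
      (hRcont.mono Set.Icc_subset_Ici_self)).integrableOn_Icc
  -- Scaled by `γ ^ (τ - t) > 0`, the Hamiltonian inequality bounds the derivative of
  -- `-γ ^ (τ - t) * v (X τ)` by the discounted reward; integrate over `[t, t + Δt]`.
  have key := sub_le_integral_of_hasDeriv_right_of_le (by linarith) hcont.neg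
    (fun τ hτ => (hderiv τ hτ.1.le).neg.hasDerivWithinAt) hint fun τ hτ => by
      have := mul_le_mul_of_nonneg_left (hineq τ hτ.1.le) (Real.rpow_nonneg hγ0.le (τ - t))
      linarith
  simp only [Pi.neg_apply, sub_self, Real.rpow_zero, one_mul, add_sub_cancel_left] at key
  linarith

/-- If along a trajectory the Hamiltonian inequality
`R + ∇v·f ≥ −ln γ · v` holds, then the integral Bellman inequality holds. -/
theorem stmt0 {n : ℕ} {A : Type*}
    (f : EuclideanSpace ℝ (Fin n) → A → EuclideanSpace ℝ (Fin n))
    (R : EuclideanSpace ℝ (Fin n) → A → ℝ)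
    (v : EuclideanSpace ℝ (Fin n) → ℝ)
    (γ t : ℝ) (hγ0 : 0 < γ) (hγ1 : γ ≤ 1)
    (X : ℝ → EuclideanSpace ℝ (Fin n)) (U : ℝ → A)
    (hv : ContDiff ℝ 1 v)
    (hX : ∀ τ, t ≤ τ → HasDerivAt X (f (X τ) (U τ)) τ)
    (hRcont : ContinuousOn (fun τ => R (X τ) (U τ)) (Set.Ici t))
    (hineq : ∀ τ, t ≤ τ →
      R (X τ) (U τ) + fderiv ℝ v (X τ) (f (X τ) (U τ)) ≥ -Real.log γ * v (X τ)) :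
    ∀ Δt > 0,
      v (X t) ≤ (∫ τ in t..(t + Δt), γ ^ (τ - t) * R (X τ) (U τ))
        + γ ^ Δt * v (X (t + Δt)) :=
  stmt0_general f R v γ t hγ0 X U hv hX hRcont hineq
end

section
/- Let v : ℝⁿ → ℝ be continuously differentiable, γ ∈ (0,1], and X : [t,∞) → ℝⁿ a C¹ trajectory with Ẋ(τ) = f(X(τ),U(τ)). If for all τ ≥ t, −ln γ · v(X(τ)) = R(X(τ),U(τ)) + ∇v(X(τ))·f(X(τ),U(τ)), then for every Δt > 0: v(X(t)) = ∫_t^{t+Δt} γ^{τ−t} R(X(τ),U(τ)) dτ + γ^{Δt} v(X(t+Δt)). -/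
/-! The Hamiltonian equality says that `φ τ := v (X τ)` solves the linear ODE
`φ' = -log γ · φ - r` with `r τ := R (X τ) (U τ)`. Multiplying by the integrating factor
`γ ^ (τ - t)` turns it into `(γ ^ (τ - t) * φ τ)' = -γ ^ (τ - t) * r τ`, and the fundamental
theorem of calculus on `[t, t + Δt]` gives the integral Bellman equality. -/

open Real Set MeasureTheory intervalIntegral

theorem hasDerivAt_rpow_sub_const {γ : ℝ} (hγ : 0 < γ) (a τ : ℝ) :
    HasDerivAt (fun s : ℝ => γ ^ (s - a)) (log γ * γ ^ (τ - a)) τ := by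
  simpa using ((hasDerivAt_id τ).sub_const a).const_rpow hγ

theorem hasDerivAt_rpow_sub_mul_of_hasDerivAt {γ a τ : ℝ} (hγ : 0 < γ) {φ r : ℝ → ℝ}
    (hφ : HasDerivAt φ (-log γ * φ τ - r τ) τ) :
    HasDerivAt (fun s => γ ^ (s - a) * φ s) (-(γ ^ (τ - a) * r τ)) τ :=
  ((hasDerivAt_rpow_sub_const hγ a τ).mul hφ).congr_deriv (by ring)

theorem eq_integral_rpow_mul_add_of_hasDerivAt {γ a b : ℝ} (hγ : 0 < γ) (hab : a ≤ b)
    {φ r : ℝ → ℝ} (hφ : ∀ τ ∈ Icc a b, HasDerivAt φ (-log γ * φ τ - r τ) τ)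
    (hr : ContinuousOn r (Icc a b)) :
    φ a = (∫ τ in a..b, γ ^ (τ - a) * r τ) + γ ^ (b - a) * φ b := by
  have hderiv : ∀ τ ∈ uIcc a b,
      HasDerivAt (fun s => γ ^ (s - a) * φ s) (-(γ ^ (τ - a) * r τ)) τ := fun τ hτ =>
    hasDerivAt_rpow_sub_mul_of_hasDerivAt hγ (hφ τ (uIcc_of_le hab ▸ hτ))
  have hdiscount : Continuous fun τ : ℝ => γ ^ (τ - a) := continuous_iff_continuousAt.2
    fun τ => (hasDerivAt_rpow_sub_const hγ a τ).continuousAt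
  have hint : IntervalIntegrable (fun τ => -(γ ^ (τ - a) * r τ)) volume a b :=
    ((hdiscount.continuousOn.mul hr).neg).intervalIntegrable_of_Icc hab
  have hFTC := integral_eq_sub_of_hasDerivAt hderiv hint
  simp only [intervalIntegral.integral_neg, sub_self, rpow_zero, one_mul] at hFTC
  linarith

theorem stmt1_general {n : ℕ} {A : Type*}
    (f : EuclideanSpace ℝ (Fin n) → A → EuclideanSpace ℝ (Fin n))
    (R : EuclideanSpace ℝ (Fin n) → A → ℝ)
    (v : EuclideanSpace ℝ (Fin n) → ℝ)
    (γ t : ℝ) (hγ0 : 0 < γ)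
    (X : ℝ → EuclideanSpace ℝ (Fin n)) (U : ℝ → A)
    (hv : ContDiff ℝ 1 v)
    (hX : ∀ τ, t ≤ τ → HasDerivAt X (f (X τ) (U τ)) τ)
    (hRcont : ContinuousOn (fun τ => R (X τ) (U τ)) (Set.Ici t))
    (hineq : ∀ τ, t ≤ τ →
      -Real.log γ * v (X τ) = R (X τ) (U τ) + fderiv ℝ v (X τ) (f (X τ) (U τ))) :
    ∀ Δt > 0,
      v (X t) = (∫ τ in t..(t + Δt), γ ^ (τ - t) * R (X τ) (U τ))
        + γ ^ Δt * v (X (t + Δt)) := by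
  intro Δt hΔt
  have hvX : ∀ τ ∈ Icc t (t + Δt), HasDerivAt (fun s => v (X s))
      (-log γ * v (X τ) - R (X τ) (U τ)) τ := by
    intro τ hτ
    rw [hineq τ hτ.1, add_sub_cancel_left]
    exact (hv.differentiable one_ne_zero (X τ)).hasFDerivAt.comp_hasDerivAt τ (hX τ hτ.1)
  have hbellman := eq_integral_rpow_mul_add_of_hasDerivAt hγ0 (by linarith) hvX
    (hRcont.mono Icc_subset_Ici_self)
  rwa [add_sub_cancel_left] at hbellman

/-- If along a trajectory the Hamiltonian equality
`R + ∇v·f = −ln γ · v` holds, then the integral Bellman equality holds. -/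
theorem stmt1 {n : ℕ} {A : Type*}
    (f : EuclideanSpace ℝ (Fin n) → A → EuclideanSpace ℝ (Fin n))
    (R : EuclideanSpace ℝ (Fin n) → A → ℝ)
    (v : EuclideanSpace ℝ (Fin n) → ℝ)
    (γ t : ℝ) (hγ0 : 0 < γ) (hγ1 : γ ≤ 1)
    (X : ℝ → EuclideanSpace ℝ (Fin n)) (U : ℝ → A)
    (hv : ContDiff ℝ 1 v)
    (hX : ∀ τ, t ≤ τ → HasDerivAt X (f (X τ) (U τ)) τ)
    (hRcont : ContinuousOn (fun τ => R (X τ) (U τ)) (Set.Ici t))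
    (hineq : ∀ τ, t ≤ τ →
      -Real.log γ * v (X τ) = R (X τ) (U τ) + fderiv ℝ v (X τ) (f (X τ) (U τ))) :
    ∀ Δt > 0,
      v (X t) = (∫ τ in t..(t + Δt), γ ^ (τ - t) * R (X τ) (U τ))
        + γ ^ Δt * v (X (t + Δt)) :=
  stmt1_general f R v γ t hγ0 X U hv hX hRcont hineq
end

section
/- If for every admissible policy π there exists a policy π' maximizing the Hamiltonian pointwise, i.e., π'(x) ∈ argmax_{u∈U} h(x, u, ∇v_π(x)) for all x, and the policy improvement theorem holds, then the optimal value function v_* satisfies the HJB equation: −ln γ · v_*(x) = max_{u∈U} h(x, u, ∇v_*(x)) for all x. -/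
open Filter MeasureTheory Topology

noncomputable section HJB

variable {n : ℕ} {A : Type*}

/-- The (discounted) value function of a stationary policy `ρ`, given the flow
`φ ρ` of the closed-loop system. -/
def val (γ : ℝ) (R : EuclideanSpace ℝ (Fin n) → A → ℝ)
    (φ : (EuclideanSpace ℝ (Fin n) → A) → EuclideanSpace ℝ (Fin n) → ℝ →
      EuclideanSpace ℝ (Fin n))
    (ρ : EuclideanSpace ℝ (Fin n) → A) (x : EuclideanSpace ℝ (Fin n)) : ℝ :=
  ∫ τ in Set.Ioi (0:ℝ), γ ^ τ * R (φ ρ x τ) (ρ (φ ρ x τ))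

/-- A policy is admissible when its return is integrable from every initial
state (its value function is finite everywhere). -/
def admissible (γ : ℝ) (R : EuclideanSpace ℝ (Fin n) → A → ℝ)
    (φ : (EuclideanSpace ℝ (Fin n) → A) → EuclideanSpace ℝ (Fin n) → ℝ →
      EuclideanSpace ℝ (Fin n))
    (ρ : EuclideanSpace ℝ (Fin n) → A) : Prop :=
  ∀ x, IntegrableOn (fun τ => γ ^ τ * R (φ ρ x τ) (ρ (φ ρ x τ))) (Set.Ioi (0:ℝ))

/-! Improving an optimal policy `π⋆` greedily with respect to `v⋆` gives, by the policy improvement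
theorem and optimality, a policy `π'` with `v⋆ ≤ v_{π'} ≤ v⋆`. So `v_{π'} = v⋆`, and the Bellman
equation of `π'` says that `−ln γ · v⋆(x)` is the Hamiltonian at `π'(x)`, which maximizes it. -/

theorem val_eq_of_improves_optimal
    {f : EuclideanSpace ℝ (Fin n) → A → EuclideanSpace ℝ (Fin n)}
    {R : EuclideanSpace ℝ (Fin n) → A → ℝ} {γ : ℝ}
    {φ : (EuclideanSpace ℝ (Fin n) → A) → EuclideanSpace ℝ (Fin n) → ℝ →
      EuclideanSpace ℝ (Fin n)}
    (hPIT : ∀ ρ ρ', admissible γ R φ ρ →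
      (∀ x u, R x u + fderiv ℝ (val γ R φ ρ) x (f x u)
        ≤ R x (ρ' x) + fderiv ℝ (val γ R φ ρ) x (f x (ρ' x))) →
      admissible γ R φ ρ' ∧ ∀ x, val γ R φ ρ x ≤ val γ R φ ρ' x)
    {πstar ρ' : EuclideanSpace ℝ (Fin n) → A} (hstaradm : admissible γ R φ πstar)
    (hopt : ∀ ρ, admissible γ R φ ρ → ∀ x, val γ R φ ρ x ≤ val γ R φ πstar x)
    (himp : ∀ x u, R x u + fderiv ℝ (val γ R φ πstar) x (f x u)
        ≤ R x (ρ' x) + fderiv ℝ (val γ R φ πstar) x (f x (ρ' x))) :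
    admissible γ R φ ρ' ∧ val γ R φ ρ' = val γ R φ πstar := by
  obtain ⟨hadm', hle⟩ := hPIT πstar ρ' hstaradm himp
  exact ⟨hadm', funext fun x => (hopt ρ' hadm' x).antisymm (hle x)⟩

theorem stmt7_general
    (f : EuclideanSpace ℝ (Fin n) → A → EuclideanSpace ℝ (Fin n))
    (R : EuclideanSpace ℝ (Fin n) → A → ℝ)
    (γ : ℝ)
    (φ : (EuclideanSpace ℝ (Fin n) → A) → EuclideanSpace ℝ (Fin n) → ℝ →
      EuclideanSpace ℝ (Fin n))
    -- every admissible policy satisfies the infinitesimal Bellman equation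
    (hbell : ∀ ρ, admissible γ R φ ρ → ∀ x,
      -Real.log γ * val γ R φ ρ x
        = R x (ρ x) + fderiv ℝ (val γ R φ ρ) x (f x (ρ x)))
    -- existence of a pointwise Hamiltonian maximizer (Assumption 1)
    (himpex : ∀ ρ, admissible γ R φ ρ → ∃ ρ' : EuclideanSpace ℝ (Fin n) → A,
      ∀ x u, R x u + fderiv ℝ (val γ R φ ρ) x (f x u)
        ≤ R x (ρ' x) + fderiv ℝ (val γ R φ ρ) x (f x (ρ' x)))
    -- the policy improvement theorem holds
    (hPIT : ∀ ρ ρ', admissible γ R φ ρ →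
      (∀ x u, R x u + fderiv ℝ (val γ R φ ρ) x (f x u)
        ≤ R x (ρ' x) + fderiv ℝ (val γ R φ ρ) x (f x (ρ' x))) →
      admissible γ R φ ρ' ∧ ∀ x, val γ R φ ρ x ≤ val γ R φ ρ' x)
    -- v⋆ is the value function of an optimal admissible policy π⋆
    (πstar : EuclideanSpace ℝ (Fin n) → A)
    (vstar : EuclideanSpace ℝ (Fin n) → ℝ)
    (hstaradm : admissible γ R φ πstar)
    (hvstar : vstar = val γ R φ πstar)
    (hopt : ∀ ρ, admissible γ R φ ρ → ∀ x, val γ R φ ρ x ≤ vstar x) :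
    ∀ x, IsGreatest (Set.range fun u : A => R x u + fderiv ℝ vstar x (f x u))
      (-Real.log γ * vstar x) := by
  subst hvstar
  obtain ⟨ρ', himp⟩ := himpex πstar hstaradm
  obtain ⟨hadm', hval⟩ := val_eq_of_improves_optimal hPIT hstaradm hopt himp
  have hbell' := hbell ρ' hadm'
  rw [hval] at hbell'
  intro x
  exact ⟨⟨ρ' x, (hbell' x).symm⟩,
    Set.forall_mem_range.2 fun u => (himp x u).trans (hbell' x).ge⟩

/-- if every admissible policy admits a policy maximizing the
Hamiltonian pointwise, and the policy improvement theorem holds, then the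
optimal value function `v⋆` satisfies the HJB equation
`−ln γ · v⋆(x) = max_{u} h(x, u, ∇v⋆(x))`. -/
theorem stmt7
    (f : EuclideanSpace ℝ (Fin n) → A → EuclideanSpace ℝ (Fin n))
    (R : EuclideanSpace ℝ (Fin n) → A → ℝ)
    (γ : ℝ) (hγ0 : 0 < γ) (hγ1 : γ ≤ 1)
    (φ : (EuclideanSpace ℝ (Fin n) → A) → EuclideanSpace ℝ (Fin n) → ℝ →
      EuclideanSpace ℝ (Fin n))
    -- every admissible policy satisfies the infinitesimal Bellman equation
    (hbell : ∀ ρ, admissible γ R φ ρ → ∀ x,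
      -Real.log γ * val γ R φ ρ x
        = R x (ρ x) + fderiv ℝ (val γ R φ ρ) x (f x (ρ x)))
    -- existence of a pointwise Hamiltonian maximizer (Assumption 1)
    (himpex : ∀ ρ, admissible γ R φ ρ → ∃ ρ' : EuclideanSpace ℝ (Fin n) → A,
      ∀ x u, R x u + fderiv ℝ (val γ R φ ρ) x (f x u)
        ≤ R x (ρ' x) + fderiv ℝ (val γ R φ ρ) x (f x (ρ' x)))
    -- the policy improvement theorem holds
    (hPIT : ∀ ρ ρ', admissible γ R φ ρ →
      (∀ x u, R x u + fderiv ℝ (val γ R φ ρ) x (f x u)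
        ≤ R x (ρ' x) + fderiv ℝ (val γ R φ ρ) x (f x (ρ' x))) →
      admissible γ R φ ρ' ∧ ∀ x, val γ R φ ρ x ≤ val γ R φ ρ' x)
    -- v⋆ is the value function of an optimal admissible policy π⋆
    (πstar : EuclideanSpace ℝ (Fin n) → A)
    (vstar : EuclideanSpace ℝ (Fin n) → ℝ)
    (hstaradm : admissible γ R φ πstar)
    (hvstar : vstar = val γ R φ πstar)
    (hopt : ∀ ρ, admissible γ R φ ρ → ∀ x, val γ R φ ρ x ≤ vstar x)
    -- the value function of any admissible policy agrees with v⋆ only if it equals v⋆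
    (hC1 : ContDiff ℝ 1 vstar) :
    ∀ x, IsGreatest (Set.range fun u : A => R x u + fderiv ℝ vstar x (f x u))
      (-Real.log γ * vstar x) :=
  stmt7_general f R γ φ hbell himpex hPIT πstar vstar hstaradm hvstar hopt

end HJB
end
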